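/- Let C = (p,q,ω,u) be an arithmetic channel, σ an n-repartition of q, x ∈ (Z[X])^n, and λ ∈ σH(x|C,σ). For messages m₁, m₂ ∈ Z_q, nonnegative integers k₁, k₂ with (k₁+k₂+k₁k₂)p < q/p, and ciphertexts (c₁,c₁') ∈ S^x_{C,k₁}(m₁|σ), (c₂,c₂') ∈ S^x_{C,k₂}(m₂|σ) where additionally ⟦C⟧(r_t(m_t)) ∈ {0,1,...,p} for the associated noise sections, the product ciphertext (c₂'·c₁ + c₁'·c₂ − c₁ ⊠_λ c₂, c₁'·c₂') lies in S^x_{C,(k₁+k₂+k₁k₂)p}(m₁·m₂|σ). -/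
import Mathlib


open Polynomial

/-- An arithmetic channel `C = (p, q, ω, u)`: positive integers `p < q`, `ω`, and a
polynomial `u ∈ ℤ[X]` with `u(ω) ≡ 0 (mod q)`. -/
structure ArithChannel where
  p : ℕ
  q : ℕ
  ω : ℕ
  u : Polynomial ℤ
  hp : 0 < p
  hq : 0 < q
  hω : 0 < ω
  hpq : p < q
  hu : (q : ℤ) ∣ u.eval (ω : ℤ)

namespace ArithChannel

variable (C : ArithChannel)

/-- The quotient ring `Z_q[X]/(u)`. -/
abbrev Rq : Type :=
  Polynomial (ZMod C.q) ⧸ Ideal.span {C.u.map (Int.castRingHom (ZMod C.q))}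

/-- The evaluation ring homomorphism `⟦C⟧ : Z_q[X]/(u) → Z_q`, `v ↦ v(ω)`. -/
noncomputable def ev : C.Rq →+* ZMod C.q :=
  Ideal.Quotient.lift _ (Polynomial.evalRingHom ((C.ω : ZMod C.q)))
    (by
      intro a ha
      rw [Ideal.mem_span_singleton] at ha
      obtain ⟨b, rfl⟩ := ha
      have hω : ((C.ω : ℤ) : ZMod C.q) = ((C.ω : ZMod C.q)) := by push_cast; ring
      have h0 : (C.u.map (Int.castRingHom (ZMod C.q))).eval ((C.ω : ZMod C.q)) = 0 := by
        rw [← hω, Polynomial.eval_intCast_map]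
        exact (ZMod.intCast_zmod_eq_zero_iff_dvd _ _).mpr C.hu
      simp only [Polynomial.coe_evalRingHom, Polynomial.eval_mul, h0, zero_mul])

/-- The canonical map `ℤ[X] → Z_q[X]/(u)`. -/
noncomputable def toRq : Polynomial ℤ →+* C.Rq :=
  (Ideal.Quotient.mk _).comp (Polynomial.mapRingHom (Int.castRingHom (ZMod C.q)))

end ArithChannel

/-- `qfac q 0 = 1`, and for `i ≥ 1`, `qfac q i` is the `i`-th smallest prime factor of `q`. -/
noncomputable def qfac (q : ℕ) (i : ℕ) : ℕ :=
  if i = 0 then 1 else ((Nat.primeFactors q).sort (· ≤ ·)).getD (i - 1) 1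

/-- `σ[q]_{i,j}` for an `n`-repartition `σ` of `q`. -/
noncomputable def sbrack (q : ℕ) {n : ℕ} (σ : Fin n → ℕ) (i j : Fin n) : ℕ :=
  if σ i ≠ σ j then q / (qfac q (σ i) * qfac q (σ j)) else q / qfac q (σ i)

namespace ArithChannel

variable (C : ArithChannel)

/-- `E(C)`: sections of `⟦C⟧`. -/
def IsSection (r : ZMod C.q → C.Rq) : Prop := ∀ m, C.ev (r m) = m

/-- `e ∈ I_k(C)`: `ι_q(⟦C⟧(e)) ∈ {0, p, …, kp}`. -/
def InI (k : ℕ) (e : C.Rq) : Prop :=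
  ∃ j : ℕ, j ≤ k ∧ ((C.ev e).val : ℤ) = (j : ℤ) * C.p

/-- `c ∈ σZ_q[X]_u`: each `⟦C⟧(c_i)` is a multiple of `q_{σ(i)}` in `Z_q`. -/
def InSigma {n : ℕ} (σ : Fin n → ℕ) (c : Fin n → C.Rq) : Prop :=
  ∀ i, ∃ t : ZMod C.q, C.ev (c i) = (qfac C.q (σ i) : ZMod C.q) * t

/-- `(c, c') ∈ S^x_{C,k}(m|σ)`: the ACES encryption space. -/
def Enc {n : ℕ} (σ : Fin n → ℕ) (x : Fin n → Polynomial ℤ) (k : ℕ) (m : ZMod C.q)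
    (c : Fin n → C.Rq) (c' : C.Rq) : Prop :=
  C.InSigma σ c ∧ ∃ r : ZMod C.q → C.Rq, C.IsSection r ∧ ∃ e : C.Rq,
    C.InI k e ∧ c' = r m + (∑ i, c i * C.toRq (x i)) + e

/-- `S(ℓ) = Σᵢ ι_q(ℓᵢ)·ι_q(⟦C⟧(xᵢ))`, computed in `ℤ`. -/
noncomputable def Sdot {n : ℕ} (x : Fin n → Polynomial ℤ) (ℓ : Fin n → ZMod C.q) : ℤ :=
  ∑ i, ((ℓ i).val : ℤ) * ((C.ev (C.toRq (x i))).val : ℤ)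

/-- The margin of `ℓ` relative to `x`. -/
noncomputable def marg {n : ℕ} (x : Fin n → Polynomial ℤ) (ℓ : Fin n → ZMod C.q) : ℚ :=
  (C.Sdot x ℓ : ℚ) / C.q - ⌊(C.Sdot x ℓ : ℚ) / C.q⌋

/-- `ℓ ∈ L^k_{p,q}(x)`: the `k`-th space of `p`-locators relative to `x`. -/
noncomputable def IsLocator {n : ℕ} (x : Fin n → Polynomial ℤ) (k : ℤ)
    (ℓ : Fin n → ZMod C.q) : Prop :=
  (∑ i, ((C.ev (C.toRq (x i))).val : ℤ)) - ⌊(C.Sdot x ℓ : ℚ) / C.q⌋ = k * C.p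

/-- `δ ∈ D^k_{p,q}(x)`: the `k`-th space of `p`-directors relative to `x`. -/
noncomputable def IsDirector {n : ℕ} (x : Fin n → Polynomial ℤ) (k : ℤ)
    (δ : Fin n → ZMod C.q) : Prop :=
  ⌊(C.Sdot x δ : ℚ) / C.q⌋ = k * C.p

end ArithChannel

lemma qfac_mem {q i : ℕ} (hi0 : i ≠ 0) (hi : i ≤ (Nat.primeFactors q).card) :
    qfac q i ∈ Nat.primeFactors q := by
  unfold qfac
  rw [if_neg hi0]
  have hlen : ((Nat.primeFactors q).sort (· ≤ ·)).length = (Nat.primeFactors q).card :=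
    Finset.length_sort _
  have hlt : i - 1 < ((Nat.primeFactors q).sort (· ≤ ·)).length := by omega
  rw [List.getD_eq_getElem _ _ hlt]
  have := List.getElem_mem hlt
  rwa [Finset.mem_sort] at this

lemma qfac_dvd {q : ℕ} (i : ℕ) (hi : i ≤ (Nat.primeFactors q).card) : qfac q i ∣ q := by
  rcases eq_or_ne i 0 with rfl | h0
  · simp [qfac]
  · exact Nat.dvd_of_mem_primeFactors (qfac_mem h0 hi)

lemma qfac_ne {q i j : ℕ} (hi0 : i ≠ 0) (hj0 : j ≠ 0) (hij : i ≠ j)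
    (hi : i ≤ (Nat.primeFactors q).card) (hj : j ≤ (Nat.primeFactors q).card) :
    qfac q i ≠ qfac q j := by
  unfold qfac
  rw [if_neg hi0, if_neg hj0]
  have hlen : ((Nat.primeFactors q).sort (· ≤ ·)).length = (Nat.primeFactors q).card :=
    Finset.length_sort _
  have hlti : i - 1 < ((Nat.primeFactors q).sort (· ≤ ·)).length := by omega
  have hltj : j - 1 < ((Nat.primeFactors q).sort (· ≤ ·)).length := by omega
  rw [List.getD_eq_getElem _ _ hlti, List.getD_eq_getElem _ _ hltj]
  intro h
  have hnd : ((Nat.primeFactors q).sort (· ≤ ·)).Nodup := Finset.sort_nodup _ _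
  have := (List.Nodup.getElem_inj_iff hnd).mp h
  omega

lemma sbrack_mul_dvd {q : ℕ} (hq : 0 < q) {n : ℕ} (σ : Fin n → ℕ)
    (hσ : ∀ i, σ i ≤ (Nat.primeFactors q).card) (i j : Fin n) :
    q ∣ sbrack q σ i j * (qfac q (σ i) * qfac q (σ j)) := by
  unfold sbrack
  by_cases h : σ i ≠ σ j
  · rw [if_pos h]
    have hd : qfac q (σ i) * qfac q (σ j) ∣ q := by
      rcases eq_or_ne (σ i) 0 with h0 | h0
      · simpa [qfac, h0] using qfac_dvd (σ j) (hσ j)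
      rcases eq_or_ne (σ j) 0 with h1 | h1
      · simpa [qfac, h1] using qfac_dvd (σ i) (hσ i)
      · have hpi := Nat.prime_of_mem_primeFactors (qfac_mem h0 (hσ i))
        have hpj := Nat.prime_of_mem_primeFactors (qfac_mem h1 (hσ j))
        have hne := qfac_ne h0 h1 h (hσ i) (hσ j)
        exact Nat.Coprime.mul_dvd_of_dvd_of_dvd
          ((Nat.coprime_primes hpi hpj).mpr hne)
          (qfac_dvd (σ i) (hσ i)) (qfac_dvd (σ j) (hσ j))
    rw [Nat.div_mul_cancel hd]
  · rw [if_neg h]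
    push_neg at h
    rw [h, ← mul_assoc, Nat.div_mul_cancel (qfac_dvd (σ j) (hσ j))]
    exact dvd_mul_right _ _


namespace ArithChannel
variable (C : ArithChannel)

lemma ev_toRq (f : Polynomial ℤ) :
    C.ev (C.toRq f) = (f.map (Int.castRingHom (ZMod C.q))).eval (C.ω : ZMod C.q) := rfl

lemma ev_smul (z : ZMod C.q) (a : C.Rq) : C.ev (z • a) = z * C.ev a := by
  obtain ⟨b, rfl⟩ := Ideal.Quotient.mk_surjective a
  show C.ev (Ideal.Quotient.mk _ (z • b)) = _
  show (z • b).eval _ = _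
  rw [Polynomial.eval_smul, smul_eq_mul]
  rfl

lemma ev_section (m : ZMod C.q) :
    C.ev (C.toRq (Polynomial.C (m.val : ℤ))) = m := by
  haveI : NeZero C.q := ⟨C.hq.ne'⟩
  rw [ev_toRq, Polynomial.map_C, Polynomial.eval_C]
  rw [eq_intCast, Int.cast_natCast, ZMod.natCast_val, ZMod.cast_id]

end ArithChannel

/-- Homomorphic multiplication: for `λ ∈ σH(x|C,σ)`, messages `m₁, m₂ ∈ Z_q` with
`ι_q(m_t) ≤ p` (so that `⟦C⟧(r_t(m_t)) ∈ {0,1,…,p}` for the noise sections), levels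
`k₁, k₂` with `(k₁+k₂+k₁k₂)p < q/p`, and ciphertexts `(c_t,c_t') ∈ S^x_{C,k_t}(m_t|σ)`,
the product ciphertext `(c₂'·c₁ + c₁'·c₂ − c₁ ⊠_λ c₂, c₁'·c₂')` lies in
`S^x_{C,(k₁+k₂+k₁k₂)p}(m₁·m₂|σ)`. -/
theorem stmt14 (C : ArithChannel) (n : ℕ) (σ : Fin n → ℕ)
    (hσ : ∀ i, σ i ≤ (Nat.primeFactors C.q).card)
    (x : Fin n → Polynomial ℤ)
    (lam : Fin n → Fin n → Fin n → ZMod C.q)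
    (hlam₁ : ∀ i j, ∃ t : ZMod C.q,
      C.ev (C.toRq (x i) * C.toRq (x j) - ∑ k, lam i j k • C.toRq (x k))
        = ((sbrack C.q σ i j : ℕ) : ZMod C.q) * t)
    (hlam₂ : ∀ i j k, ∃ t : ZMod C.q,
      lam i j k = ((qfac C.q (σ k) : ℕ) : ZMod C.q) * t)
    (m₁ m₂ : ZMod C.q) (hm₁ : m₁.val ≤ C.p) (hm₂ : m₂.val ≤ C.p)
    (k₁ k₂ : ℕ)
    (hk : (((k₁ + k₂ + k₁ * k₂) * C.p : ℕ) : ℚ) < (C.q : ℚ) / C.p)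
    (c₁ c₂ : Fin n → C.Rq) (c₁' c₂' : C.Rq)
    (h₁ : C.Enc σ x k₁ m₁ c₁ c₁') (h₂ : C.Enc σ x k₂ m₂ c₂ c₂') :
    C.Enc σ x ((k₁ + k₂ + k₁ * k₂) * C.p) (m₁ * m₂)
      (fun i => c₂' * c₁ i + c₁' * c₂ i - ∑ i', ∑ j', lam i' j' i • (c₁ i' * c₂ j'))
      (c₁' * c₂') := by
  haveI : NeZero C.q := ⟨C.hq.ne'⟩
  obtain ⟨hs₁, r₁, hr₁, e₁, ⟨j₁, hj₁, hE₁⟩, hc₁'⟩ := h₁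
  obtain ⟨hs₂, r₂, hr₂, e₂, ⟨j₂, hj₂, hE₂⟩, hc₂'⟩ := h₂
  choose t₁ ht₁ using hs₁
  choose t₂ ht₂ using hs₂
  choose tl htl using hlam₂
  choose tb htb using hlam₁
  -- zero lemma
  have hzero : ∀ i' j' : Fin n, ((sbrack C.q σ i' j' : ℕ) : ZMod C.q) *
      (((qfac C.q (σ i') : ℕ) : ZMod C.q) * ((qfac C.q (σ j') : ℕ) : ZMod C.q)) = 0 := by
    intro i' j'
    have hdvd := sbrack_mul_dvd C.hq σ hσ i' j'
    have h0 : ((sbrack C.q σ i' j' * (qfac C.q (σ i') * qfac C.q (σ j')) : ℕ) : ZMod C.q) = 0 :=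
      (ZMod.natCast_eq_zero_iff _ _).mpr hdvd
    push_cast at h0
    linear_combination h0
  have hlamX : ∀ i' j',
      C.ev (C.toRq (x i')) * C.ev (C.toRq (x j')) - ∑ k, lam i' j' k * C.ev (C.toRq (x k))
        = ((sbrack C.q σ i' j' : ℕ) : ZMod C.q) * tb i' j' := by
    intro i' j'
    have h := htb i' j'
    rw [map_sub, map_mul, map_sum] at h
    simp only [ArithChannel.ev_smul] at h
    exact h
  -- inner sum collapse
  have hinner : ∀ i' j' : Fin n,
      ∑ i, lam i' j' i * (C.ev (c₁ i') * C.ev (c₂ j')) * C.ev (C.toRq (x i))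
        = (C.ev (c₁ i') * C.ev (C.toRq (x i'))) * (C.ev (c₂ j') * C.ev (C.toRq (x j'))) := by
    intro i' j'
    have hsm : ∑ i, lam i' j' i * (C.ev (c₁ i') * C.ev (c₂ j')) * C.ev (C.toRq (x i))
        = (C.ev (c₁ i') * C.ev (c₂ j')) * ∑ i, lam i' j' i * C.ev (C.toRq (x i)) := by
      rw [Finset.mul_sum]
      exact Finset.sum_congr rfl fun i _ => by ring
    rw [hsm]
    have h := hlamX i' j'
    rw [ht₁ i', ht₂ j']
    linear_combination (((qfac C.q (σ i') : ℕ) : ZMod C.q) * t₁ i' *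
        (((qfac C.q (σ j') : ℕ) : ZMod C.q)) * t₂ j') * h.symm
      + (- tb i' j' * t₁ i' * t₂ j') * hzero i' j'
  -- evaluation of the sum part
  have hsum : C.ev (∑ i, (c₂' * c₁ i + c₁' * c₂ i
        - ∑ i', ∑ j', lam i' j' i • (c₁ i' * c₂ j')) * C.toRq (x i))
      = C.ev c₂' * (∑ i, C.ev (c₁ i) * C.ev (C.toRq (x i)))
      + C.ev c₁' * (∑ i, C.ev (c₂ i) * C.ev (C.toRq (x i)))
      - (∑ i, C.ev (c₁ i) * C.ev (C.toRq (x i))) * (∑ i, C.ev (c₂ i) * C.ev (C.toRq (x i))) := by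
    rw [map_sum]
    have step : ∀ i : Fin n, C.ev ((c₂' * c₁ i + c₁' * c₂ i
          - ∑ i', ∑ j', lam i' j' i • (c₁ i' * c₂ j')) * C.toRq (x i))
        = C.ev c₂' * (C.ev (c₁ i) * C.ev (C.toRq (x i)))
          + C.ev c₁' * (C.ev (c₂ i) * C.ev (C.toRq (x i)))
          - ∑ i', ∑ j', lam i' j' i * (C.ev (c₁ i') * C.ev (c₂ j')) * C.ev (C.toRq (x i)) := by
      intro i
      rw [map_mul, map_sub, map_add, map_mul, map_mul, map_sum]
      simp only [map_sum, ArithChannel.ev_smul, map_mul]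
      simp only [sub_mul, add_mul, Finset.sum_mul]
      ring
    rw [Finset.sum_congr rfl fun i _ => step i]
    rw [Finset.sum_sub_distrib, Finset.sum_add_distrib, ← Finset.mul_sum, ← Finset.mul_sum]
    congr 1
    rw [Finset.sum_comm]
    have : ∀ i' : Fin n, ∑ i : Fin n, ∑ j' : Fin n,
        lam i' j' i * (C.ev (c₁ i') * C.ev (c₂ j')) * C.ev (C.toRq (x i))
        = ∑ j' : Fin n, (C.ev (c₁ i') * C.ev (C.toRq (x i'))) * (C.ev (c₂ j') * C.ev (C.toRq (x j'))) := by
      intro i'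
      rw [Finset.sum_comm]
      exact Finset.sum_congr rfl fun j' _ => hinner i' j'
    rw [Finset.sum_congr rfl fun i' _ => this i']
    rw [Finset.sum_mul_sum]
  have hev1 : C.ev c₁' = m₁ + (∑ i, C.ev (c₁ i) * C.ev (C.toRq (x i))) + C.ev e₁ := by
    rw [hc₁', map_add, map_add, map_sum, hr₁ m₁]
    simp only [map_mul]
  have hev2 : C.ev c₂' = m₂ + (∑ i, C.ev (c₂ i) * C.ev (C.toRq (x i))) + C.ev e₂ := by
    rw [hc₂', map_add, map_add, map_sum, hr₂ m₂]
    simp only [map_mul]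
  -- the chosen error term
  set e : C.Rq := c₁' * c₂' - C.toRq (Polynomial.C (((m₁ * m₂).val : ℤ)))
    - ∑ i, (c₂' * c₁ i + c₁' * c₂ i - ∑ i', ∑ j', lam i' j' i • (c₁ i' * c₂ j')) * C.toRq (x i)
    with he
  have hevE : C.ev e = m₁ * C.ev e₂ + m₂ * C.ev e₁ + C.ev e₁ * C.ev e₂ := by
    rw [he, map_sub, map_sub, map_mul, C.ev_section, hsum, hev1, hev2]
    ring
  have hE₁' : C.ev e₁ = ((j₁ * C.p : ℕ) : ZMod C.q) := by
    have h2 : (C.ev e₁).val = j₁ * C.p := by exact_mod_cast hE₁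
    rw [← h2, ZMod.natCast_val, ZMod.cast_id]
  have hE₂' : C.ev e₂ = ((j₂ * C.p : ℕ) : ZMod C.q) := by
    have h2 : (C.ev e₂).val = j₂ * C.p := by exact_mod_cast hE₂
    rw [← h2, ZMod.natCast_val, ZMod.cast_id]
  set N : ℕ := m₁.val * j₂ + m₂.val * j₁ + j₁ * j₂ * C.p with hN
  have hm1c : ((m₁.val : ℕ) : ZMod C.q) = m₁ := by rw [ZMod.natCast_val, ZMod.cast_id]
  have hm2c : ((m₂.val : ℕ) : ZMod C.q) = m₂ := by rw [ZMod.natCast_val, ZMod.cast_id]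
  have hevN : C.ev e = ((N * C.p : ℕ) : ZMod C.q) := by
    rw [hevE, hE₁', hE₂', ← hm1c, ← hm2c, hN]
    push_cast
    ring
  have hNle : N ≤ (k₁ + k₂ + k₁ * k₂) * C.p := by
    have h1 : m₁.val * j₂ ≤ C.p * k₂ := Nat.mul_le_mul hm₁ hj₂
    have h2 : m₂.val * j₁ ≤ C.p * k₁ := Nat.mul_le_mul hm₂ hj₁
    have h3 : j₁ * j₂ * C.p ≤ k₁ * k₂ * C.p :=
      Nat.mul_le_mul (Nat.mul_le_mul hj₁ hj₂) le_rfl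
    rw [hN]
    nlinarith
  have hKp : ((k₁ + k₂ + k₁ * k₂) * C.p) * C.p < C.q := by
    have hp : (0 : ℚ) < C.p := by exact_mod_cast C.hp
    have := (lt_div_iff₀ hp).mp hk
    exact_mod_cast this
  have hNp : N * C.p < C.q :=
    lt_of_le_of_lt (Nat.mul_le_mul hNle le_rfl) hKp
  refine ⟨?_, fun m => C.toRq (Polynomial.C ((m.val : ℤ))), fun m => C.ev_section m, e,
    ⟨N, hNle, ?_⟩, by rw [he]; ring⟩
  · intro i
    refine ⟨C.ev c₂' * t₁ i + C.ev c₁' * t₂ i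
      - ∑ i', ∑ j', tl i' j' i * C.ev (c₁ i' * c₂ j'), ?_⟩
    have hls : C.ev (∑ i', ∑ j', lam i' j' i • (c₁ i' * c₂ j'))
        = ((qfac C.q (σ i) : ℕ) : ZMod C.q) * ∑ i', ∑ j', tl i' j' i * C.ev (c₁ i' * c₂ j') := by
      rw [map_sum, Finset.mul_sum]
      refine Finset.sum_congr rfl fun i' _ => ?_
      rw [map_sum, Finset.mul_sum]
      refine Finset.sum_congr rfl fun j' _ => ?_
      rw [ArithChannel.ev_smul, htl]
      ring
    rw [map_sub, map_add, map_mul, map_mul, hls, ht₁ i, ht₂ i]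
    ring
  · rw [hevN, ZMod.val_cast_of_lt hNp]
    push_cast
    ring
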